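/- arXiv:1307.5902 — 6 statements merged into one kernel-verified Lean document; each statement's English description precedes it below -/
import Mathlib

section
/- Let R be a commutative ℚ-algebra with elements τ, φ, φ′, φ″, C, and let D : R → R be a derivation with Dτ = 1, Dφ = φ′, Dφ′ = φ″, and DC = 0; set φ‴ := Dφ″. In the free R-module with basis (γ₃, γ₂, γ₁, γ₀) (on which D acts coordinatewise), define e₀ = γ₀, e₁ = γ₁ − τγ₀, e₂ = γ₂ − (5τ + 11/2 + φ″)γ₁ + ((5/2)τ² + 25/12 + τφ″ − φ′)γ₀, e₃ = γ₃ + τγ₂ − ((5/2)τ² + (11/2)τ − 25/12 + φ′)γ₁ + ((5/6)τ³ + (25/12)τ − C + τφ′ − 2φ)γ₀. Then D e₃ = e₂, D e₂ = −(5 + φ‴) e₁, D e₁ = −e₀, and D e₀ = 0. -/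
/-!
The `γ i` are flat, so `D` acts on `e₂` and `e₃` through their coefficients only. Writing
`e₂ = γ 1 - a • γ 2 + b • γ 3` and `e₃ = γ 0 + τ • γ 1 - c • γ 2 + d • γ 3`, the four identities
reduce to `D c = a`, `D d = b`, `D a = Y` and `D b = τ * Y` with `Y = 5 + D φ''`, which follow
from the Leibniz rule, `D τ = 1` and the vanishing of `D` on rational constants.
-/

namespace Derivation

theorem map_ofNat {S A M : Type*} [CommSemiring S] [CommSemiring A] [Algebra S A]
    [AddCommMonoid M] [Module A M] [Module S M] (D : Derivation S A M) (n : ℕ) [n.AtLeastTwo] :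
    D (ofNat(n) : A) = 0 := by
  simpa only [Nat.cast_ofNat] using D.map_natCast (OfNat.ofNat n)

section Coordinatewise

variable {S A ι : Type*} [CommSemiring S] [CommRing A] [Algebra S A] (D : Derivation S A A)

theorem coordwise_add (v w : ι → A) :
    (fun i => D ((v + w) i)) = (fun i => D (v i)) + fun i => D (w i) :=
  funext fun i => map_add D (v i) (w i)

theorem coordwise_sub (v w : ι → A) :
    (fun i => D ((v - w) i)) = (fun i => D (v i)) - fun i => D (w i) :=
  funext fun i => map_sub D (v i) (w i)

variable [DecidableEq ι]

theorem coordwise_single (j : ι) : (fun i => D ((Pi.single j 1 : ι → A) i)) = 0 := by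
  funext i
  by_cases h : i = j
  · subst h; simp
  · simp [h]

theorem coordwise_smul_single (c : A) (j : ι) :
    (fun i => D ((c • Pi.single j (1 : A)) i)) = D c • Pi.single j 1 := by
  funext i
  by_cases h : i = j
  · subst h; simp
  · simp [h]

end Coordinatewise

end Derivation

section QuinticCoefficients

variable {R : Type*} [CommRing R] [Algebra ℚ R] (D : Derivation ℚ R R) {τ φ φ' φ'' C : R}

theorem map_e₂_coeff_two (hτ : D τ = 1) :
    D (5 * τ + algebraMap ℚ R (11/2) + φ'') = 5 + D φ'' := by
  simp only [map_add, D.leibniz, D.map_ofNat, D.map_algebraMap, hτ, smul_eq_mul]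
  algebra with ℚ

theorem map_e₂_coeff_three (hτ : D τ = 1) (hφ' : D φ' = φ'') :
    D ((5/2 : ℚ) • τ^2 + algebraMap ℚ R (25/12) + τ * φ'' - φ') = τ * (5 + D φ'') := by
  simp only [map_add, map_sub, D.map_smul_of_tower, D.leibniz_pow, D.leibniz, D.map_algebraMap,
    hτ, hφ', smul_eq_mul]
  algebra with ℚ

theorem map_e₃_coeff_two (hτ : D τ = 1) (hφ' : D φ' = φ'') :
    D ((5/2 : ℚ) • τ^2 + (11/2 : ℚ) • τ - algebraMap ℚ R (25/12) + φ') =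
      5 * τ + algebraMap ℚ R (11/2) + φ'' := by
  simp only [map_add, map_sub, D.map_smul_of_tower, D.leibniz_pow, D.map_algebraMap,
    hτ, hφ', smul_eq_mul]
  algebra with ℚ

theorem map_e₃_coeff_three (hτ : D τ = 1) (hφ : D φ = φ') (hφ' : D φ' = φ'') (hC : D C = 0) :
    D ((5/6 : ℚ) • τ^3 + (25/12 : ℚ) • τ - C + τ * φ' - 2 * φ) =
      (5/2 : ℚ) • τ^2 + algebraMap ℚ R (25/12) + τ * φ'' - φ' := by
  simp only [map_add, map_sub, D.map_smul_of_tower, D.leibniz_pow, D.leibniz, D.map_ofNat,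
    hτ, hφ, hφ', hC, smul_eq_mul]
  algebra with ℚ

end QuinticCoefficients

/-- In the free module on the flat basis `(γ₃, γ₂, γ₁, γ₀) = (γ 0, γ 1, γ 2, γ 3)`,
with `D` a derivation modelling `d/dτ` (so `Dτ = 1, Dφ = φ', Dφ' = φ'', DC = 0`, `φ''' := Dφ''`),
the Hodge–Tate basis `e₃, e₂, e₁, e₀` of the mirror quintic VHS satisfies
`De₃ = e₂`, `De₂ = −(5 + φ''')e₁ = −Y e₁`, `De₁ = −e₀`, `De₀ = 0`. -/
theorem stmt4 (R : Type*) [CommRing R] [Algebra ℚ R]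
    (D : Derivation ℚ R R) (τ φ φ' φ'' C : R)
    (hτ : D τ = 1) (hφ : D φ = φ') (hφ' : D φ' = φ'') (hC : D C = 0)
    (γ : Fin 4 → Fin 4 → R) (hγ : ∀ i, γ i = Pi.single i 1)
    (e₀ e₁ e₂ e₃ : Fin 4 → R)
    (he₀ : e₀ = γ 3)
    (he₁ : e₁ = γ 2 - τ • γ 3)
    (he₂ : e₂ = γ 1 - (5 * τ + algebraMap ℚ R (11/2) + φ'') • γ 2
            + ((5/2 : ℚ) • τ^2 + algebraMap ℚ R (25/12) + τ * φ'' - φ') • γ 3)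
    (he₃ : e₃ = γ 0 + τ • γ 1
            - ((5/2 : ℚ) • τ^2 + (11/2 : ℚ) • τ - algebraMap ℚ R (25/12) + φ') • γ 2
            + ((5/6 : ℚ) • τ^3 + (25/12 : ℚ) • τ - C + τ * φ' - 2 * φ) • γ 3) :
    (fun i => D (e₃ i)) = e₂ ∧
    (fun i => D (e₂ i)) = -(5 + D φ'') • e₁ ∧
    (fun i => D (e₁ i)) = -e₀ ∧
    (fun i => D (e₀ i)) = 0 := by
  subst he₀ he₁ he₂ he₃
  simp only [hγ, D.coordwise_add, D.coordwise_sub, D.coordwise_smul_single, D.coordwise_single,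
    hτ, map_e₂_coeff_two D hτ, map_e₂_coeff_three D hτ hφ', map_e₃_coeff_two D hτ hφ',
    map_e₃_coeff_three D hτ hφ hφ' hC, and_true]
  refine ⟨?_, ?_, ?_⟩ <;> module
end

section
/- Let R be a commutative ℚ-algebra with elements τ, φ, φ′, φ″, C, and let D : R → R be a derivation with Dτ = 1, Dφ = φ′, Dφ′ = φ″, DC = 0; set φ‴ := Dφ″. Let E be the 4×4 matrix over R with rows (0,0,0,0), (1,0,0,0), (0,−(5+φ‴),0,0), (0,0,−1,0); E is the matrix, in the ordered basis ([X°],[H],−[L],[p]), of the small quantum product with [H], defined R-bilinearly by [H]∗[X°] = [H], [H]∗[H] = (5+φ‴)[L], [H]∗[L] = [p], [H]∗[p] = 0. Then each of the four column vectors v₁ = (1, −τ, −((5/2)τ² + 25/12 + τφ″ − φ′), −(5/6)τ³ − (25/12)τ + C − τφ′ + 2φ), v₂ = (0, 1, 5τ + 11/2 + φ″, (5/2)τ² + (11/2)τ − 25/12 + φ′), v₃ = (0, 0, 1, τ), v₄ = (0, 0, 0, 1) satisfies D v + E · v = 0 (with D applied entrywise). -/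
/-!
The matrix of `[H]∗` lowers the Hodge degree, so `Dv + E·v = 0` is the chain
`D v₀ = 0`, `D v₁ = -v₀`, `D v₂ = (5 + φ''') v₁`, `D v₃ = v₂` of scalar equations, and for each
of the four vectors these follow by differentiating its polynomial entries with the Leibniz rule.
-/

open Matrix

@[simp]
theorem Derivation.map_ofNat_s5 {R A M : Type*} [CommSemiring R] [CommSemiring A] [AddCommMonoid M]
    [Algebra R A] [Module A M] [Module R M] [IsScalarTower R A M]
    (D : Derivation R A M) (n : ℕ) [n.AtLeastTwo] :
    D (no_index (OfNat.ofNat n : A)) = 0 :=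
  D.map_natCast n

theorem add_lowering_mulVec_eq_zero_iff {R : Type*} [CommRing R] (Y : R) (d v : Fin 4 → R) :
    d + !![0, 0, 0, 0; 1, 0, 0, 0; 0, -Y, 0, 0; 0, 0, -1, 0] *ᵥ v = 0 ↔
      d 0 = 0 ∧ d 1 = -v 0 ∧ d 2 = Y * v 1 ∧ d 3 = v 2 := by
  simp [← List.ofFn_inj, dotProduct, Fin.sum_univ_succ, add_eq_zero_iff_eq_neg, vecHead, vecTail]

/-- With `D` a derivation modelling `d/dτ` (`Dτ = 1, Dφ = φ', Dφ' = φ'',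
DC = 0`, `φ''' := Dφ''`) and `E` the matrix of the small quantum product `[H]∗` in the
basis `([X°],[H],−[L],[p])` (rows `(0,0,0,0),(1,0,0,0),(0,−(5+φ'''),0,0),(0,0,−1,0)`),
each of the coordinate vectors `v₁,…,v₄` of the quantum-deformed classes
`[X°]_𝒬, [H]_𝒬, −[L]_𝒬, [p]_𝒬` satisfies the quantum differential equation
`Dv + E·v = 0`. -/
theorem stmt5 (R : Type*) [CommRing R] [Algebra ℚ R]
    (D : Derivation ℚ R R) (τ φ φ' φ'' C : R)
    (hτ : D τ = 1) (hφ : D φ = φ') (hφ' : D φ' = φ'') (hC : D C = 0)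
    (E : Matrix (Fin 4) (Fin 4) R)
    (hE : E = !![0, 0, 0, 0; 1, 0, 0, 0; 0, -(5 + D φ''), 0, 0; 0, 0, -1, 0])
    (v₁ v₂ v₃ v₄ : Fin 4 → R)
    (hv₁ : v₁ = ![1, -τ,
        -((5/2 : ℚ) • τ^2 + algebraMap ℚ R (25/12) + τ * φ'' - φ'),
        -((5/6 : ℚ) • τ^3) - (25/12 : ℚ) • τ + C - τ * φ' + 2 * φ])
    (hv₂ : v₂ = ![0, 1, 5 * τ + algebraMap ℚ R (11/2) + φ'',
        (5/2 : ℚ) • τ^2 + (11/2 : ℚ) • τ - algebraMap ℚ R (25/12) + φ'])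
    (hv₃ : v₃ = ![0, 0, 1, τ])
    (hv₄ : v₄ = ![0, 0, 0, 1]) :
    (fun i => D (v₁ i)) + E.mulVec v₁ = 0 ∧
    (fun i => D (v₂ i)) + E.mulVec v₂ = 0 ∧
    (fun i => D (v₃ i)) + E.mulVec v₃ = 0 ∧
    (fun i => D (v₄ i)) + E.mulVec v₄ = 0 := by
  subst hE hv₁ hv₂ hv₃ hv₄
  simp only [add_lowering_mulVec_eq_zero_iff]
  and_intros <;> simp [Derivation.leibniz, Derivation.leibniz_pow, hτ, hφ, hφ', hC] <;> algebra
end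

section
/- Let A := ℚ[H]/(H⁴) and set [X°] := 1, [L] := H²/5, [p] := H³/5, so H·H = 5[L], H·[L] = [p], H·[p] = 0. Let ∨ : A → A be the ℚ-linear involution with (a + bH + c[L] + d[p])∨ = a − bH + c[L] − d[p], let Td := 1 + (25/6)[L], and define the pairing ⟨x, y⟩ := ([p]-coefficient of x∨ · y · Td). Set v₃ := [X°], v₂ := H − (11/2)[L] − (25/6)[p], v₁ := −[L], v₀ := [p]. Then the 4×4 matrix (⟨v_i, v_j⟩) in the ordered basis (v₃, v₂, v₁, v₀) equals the matrix with rows (0,0,0,1), (0,0,1,0), (0,−1,0,0), (−1,0,0,0). -/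
open Matrix

/-- The even cohomology ring of the Fermat quintic: `A := ℚ[H]/(H⁴)`. -/
abbrev CohQuintic : Type :=
  Polynomial ℚ ⧸ Ideal.span {(Polynomial.X : Polynomial ℚ) ^ 4}

/-- The hyperplane class `H`. -/
noncomputable def Hcl : CohQuintic :=
  Ideal.Quotient.mk _ Polynomial.X

/-- The line class `[L] := H²/5`. -/
noncomputable def Lcl : CohQuintic := (1/5 : ℚ) • Hcl ^ 2

/-- The point class `[p] := H³/5`. -/
noncomputable def pcl : CohQuintic := (1/5 : ℚ) • Hcl ^ 3

/-! In the basis `1, H, [L], [p]` of `A`, the relations `H² = 5 [L]`, `H [L] = [p]` and `H⁴ = 0`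
give the product in coordinates, and the Mukai pairing of `(a, b, c, d)` and `(a', b', c', d')`
becomes `a d' − d a' − b c' + c b' + (25/6)(a b' − b a')`. The theorem is this antisymmetric form
evaluated on the coordinate vectors of the `vᵢ`. -/

namespace CohQuintic

noncomputable def ofCoords (a b c d : ℚ) : CohQuintic :=
  a • (1 : CohQuintic) + b • Hcl + c • Lcl + d • pcl

lemma Hcl_pow_four : Hcl ^ 4 = 0 := by
  rw [Hcl, ← map_pow, Ideal.Quotient.eq_zero_iff_mem]
  exact Ideal.subset_span rfl

lemma Hcl_pow_eq_zero {n : ℕ} (hn : 4 ≤ n) : Hcl ^ n = 0 :=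
  pow_eq_zero_of_le hn Hcl_pow_four

lemma Hcl_mul_Hcl : Hcl * Hcl = (5 : ℚ) • Lcl := by
  rw [Lcl, smul_smul]; norm_num [sq]

lemma Hcl_mul_Lcl : Hcl * Lcl = pcl := by
  rw [Lcl, pcl, mul_smul_comm, ← pow_succ']

lemma Hcl_mul_pcl : Hcl * pcl = 0 := by
  rw [pcl, mul_smul_comm, ← pow_succ', Hcl_pow_four, smul_zero]

lemma Lcl_mul_Lcl : Lcl * Lcl = 0 := by
  rw [Lcl, smul_mul_smul_comm, ← pow_add, Hcl_pow_eq_zero (by norm_num), smul_zero]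

lemma Lcl_mul_pcl : Lcl * pcl = 0 := by
  rw [Lcl, pcl, smul_mul_smul_comm, ← pow_add, Hcl_pow_eq_zero (by norm_num), smul_zero]

lemma pcl_mul_pcl : pcl * pcl = 0 := by
  rw [pcl, smul_mul_smul_comm, ← pow_add, Hcl_pow_eq_zero (by norm_num), smul_zero]

lemma ofCoords_mul (a b c d a' b' c' d' : ℚ) :
    ofCoords a b c d * ofCoords a' b' c' d' =
      ofCoords (a * a') (a * b' + b * a') (a * c' + c * a' + 5 * b * b')
        (a * d' + d * a' + b * c' + c * b') := by
  simp only [ofCoords, mul_add, add_mul, smul_mul_assoc, mul_smul_comm, smul_smul, one_mul,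
    mul_one, Hcl_mul_Hcl, Hcl_mul_Lcl, Hcl_mul_pcl, Lcl_mul_Lcl, Lcl_mul_pcl, pcl_mul_pcl,
    mul_comm Lcl Hcl, mul_comm pcl Hcl, mul_comm pcl Lcl, smul_zero, add_zero]
  module

-- Of `Td = 1 + t [L]` only `t [L]` meets the `H`-part of `x∨ · y`, via `H · [L] = [p]`.
lemma mukaiPairing_ofCoords (ι : CohQuintic →ₗ[ℚ] CohQuintic) (coefP : CohQuintic →ₗ[ℚ] ℚ)
    (hι : ∀ a b c d : ℚ, ι (a • (1 : CohQuintic) + b • Hcl + c • Lcl + d • pcl)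
        = a • (1 : CohQuintic) - b • Hcl + c • Lcl - d • pcl)
    (hcoef : ∀ a b c d : ℚ, coefP (a • (1 : CohQuintic) + b • Hcl + c • Lcl + d • pcl) = d)
    (t a b c d a' b' c' d' : ℚ) :
    coefP (ι (ofCoords a b c d) * ofCoords a' b' c' d' * ofCoords 1 0 t 0) =
      a * d' - d * a' - b * c' + c * b' + t * (a * b' - b * a') := by
  have hdual : ι (ofCoords a b c d) = ofCoords a (-b) c (-d) := by
    rw [ofCoords, hι, ofCoords]; module
  rw [hdual, ofCoords_mul, ofCoords_mul]
  refine (hcoef _ _ _ _).trans ?_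
  ring

end CohQuintic

open CohQuintic in
theorem stmt8_general (ι : CohQuintic →ₗ[ℚ] CohQuintic) (coefP : CohQuintic →ₗ[ℚ] ℚ)
    (hι : ∀ a b c d : ℚ, ι (a • (1 : CohQuintic) + b • Hcl + c • Lcl + d • pcl)
        = a • (1 : CohQuintic) - b • Hcl + c • Lcl - d • pcl)
    (hcoef : ∀ a b c d : ℚ, coefP (a • (1 : CohQuintic) + b • Hcl + c • Lcl + d • pcl) = d)
    (Td : CohQuintic) (hTd : Td = 1 + (25/6 : ℚ) • Lcl)
    (v : Fin 4 → CohQuintic)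
    (hv : v = ![1, Hcl - (11/2 : ℚ) • Lcl - (25/6 : ℚ) • pcl, -Lcl, pcl]) :
    Matrix.of (fun i j => coefP (ι (v i) * v j * Td)) =
      !![0, 0, 0, 1; 0, 0, 1, 0; 0, -1, 0, 0; -1, 0, 0, 0] := by
  let coords : Matrix (Fin 4) (Fin 4) ℚ :=
    !![1, 0, 0, 0; 0, 1, -11/2, -25/6; 0, 0, -1, 0; 0, 0, 0, 1]
  have hTd' : Td = ofCoords 1 0 (25/6) 0 := by rw [hTd, ofCoords]; module
  have hv' : v = fun i => ofCoords (coords i 0) (coords i 1) (coords i 2) (coords i 3) := by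
    subst hv; funext i; fin_cases i <;> simp [coords, ofCoords]
    module
  ext i j
  rw [of_apply, hv', hTd', mukaiPairing_ofCoords ι coefP hι hcoef]
  fin_cases i <;> fin_cases j <;> simp [coords, neg_div]

/-- `ι` is the ℚ-linear involution `(a + bH + c[L] + d[p])∨ =
a − bH + c[L] − d[p]`, `coefP` the `[p]`-coefficient functional, `Td = 1 + (25/6)[L]`,
and `⟨x,y⟩ := coefP (x∨ · y · Td)` the Mukai pairing.  For the Mukai basis
`v₃ = [X°], v₂ = H − (11/2)[L] − (25/6)[p], v₁ = −[L], v₀ = [p]` (Chern characters of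
`ξ₃, ξ₂, ξ₁, ξ₀`), the pairing matrix equals the polarization matrix `[Q]_e`. -/
theorem stmt8 (ι : CohQuintic →ₗ[ℚ] CohQuintic) (coefP : CohQuintic →ₗ[ℚ] ℚ)
    (hinv : ∀ x, ι (ι x) = x)
    (hι : ∀ a b c d : ℚ, ι (a • (1 : CohQuintic) + b • Hcl + c • Lcl + d • pcl)
        = a • (1 : CohQuintic) - b • Hcl + c • Lcl - d • pcl)
    (hcoef : ∀ a b c d : ℚ, coefP (a • (1 : CohQuintic) + b • Hcl + c • Lcl + d • pcl) = d)
    (Td : CohQuintic) (hTd : Td = 1 + (25/6 : ℚ) • Lcl)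
    (v : Fin 4 → CohQuintic)
    (hv : v = ![1, Hcl - (11/2 : ℚ) • Lcl - (25/6 : ℚ) • pcl, -Lcl, pcl]) :
    Matrix.of (fun i j => coefP (ι (v i) * v j * Td)) =
      !![0, 0, 0, 1; 0, 0, 1, 0; 0, -1, 0, 0; -1, 0, 0, 0] :=
  stmt8_general ι coefP hι hcoef Td hTd v hv
end

section
/- Let A := ℚ[H]/(H⁴) and set [X°] := 1, [L] := H²/5, [p] := H³/5, so H·H = 5[L], H·[L] = [p], H·[p] = 0. Set v₃ := [X°], v₂ := H − (11/2)[L] − (25/6)[p], v₁ := −[L], v₀ := [p], and let N be the 4×4 rational matrix with rows (0,0,0,0), (−1,0,0,0), (11/2, 5, 0, 0), (−25/6, 11/2, 1, 0). Then: (i) exp(N) = 1 + N + N²/2 + N³/6 equals the matrix with rows (1,0,0,0), (−1,1,0,0), (3,5,1,0), (−5,8,1,1); and (ii) the matrix, in the ordered basis (v₃, v₂, v₁, v₀), of the A-linear map x ↦ (1 − H + (5/2)[L] − (5/6)[p]) · x equals exp(N). -/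
/-! In the basis `1, H, H², H³` of `ℚ[H]/(H⁴)`, multiplication by `e^{-H} = 1 - H + H²/2 - H³/6`
is the lower unitriangular Toeplitz matrix `E` of the coefficients of `e^{-H}`, and the Mukai
vectors are the columns of a matrix `P`. The claim (ii) then reduces to the identity
`E * P = P * exp N` of rational `4 × 4` matrices, which, like (i), is a finite computation. -/

open Matrix

theorem LinearMap.apply_eq_sum_of_mul_eq_mul {K M ι : Type*} [CommSemiring K] [AddCommMonoid M]
    [Module K M] [Fintype ι] (f : M →ₗ[K] M) {b v : ι → M} {E P T : Matrix ι ι K}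
    (hf : ∀ k, f (b k) = ∑ i, E i k • b i) (hv : ∀ j, v j = ∑ k, P k j • b k)
    (hEP : E * P = P * T) (j : ι) :
    f (v j) = ∑ i, T i j • v i := by
  have sum_mul_smul : ∀ A B : Matrix ι ι K,
      ∑ i, (A * B) i j • b i = ∑ k, B k j • ∑ i, A i k • b i := by
    intro A B
    simp only [Matrix.mul_apply, Finset.sum_smul, Finset.smul_sum, smul_smul]
    rw [Finset.sum_comm]
    simp only [mul_comm]
  calc f (v j) = ∑ k, P k j • ∑ i, E i k • b i := by simp only [hv, map_sum, map_smul, hf]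
    _ = ∑ i, (P * T) i j • b i := by rw [← sum_mul_smul, hEP]
    _ = ∑ i, T i j • v i := by simp only [sum_mul_smul, hv]

def monodromyLog : Matrix (Fin 4) (Fin 4) ℚ :=
  !![0, 0, 0, 0; -1, 0, 0, 0; 11/2, 5, 0, 0; -25/6, 11/2, 1, 0]

def monodromy : Matrix (Fin 4) (Fin 4) ℚ :=
  !![1, 0, 0, 0; -1, 1, 0, 0; 3, 5, 1, 0; -5, 8, 1, 1]

def expNegHMatrix : Matrix (Fin 4) (Fin 4) ℚ :=
  !![1, 0, 0, 0; -1, 1, 0, 0; 1/2, -1, 1, 0; -1/6, 1/2, -1, 1]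

def mukaiMatrix : Matrix (Fin 4) (Fin 4) ℚ :=
  !![1, 0, 0, 0; 0, 1, 0, 0; 0, -11/10, -1/5, 0; 0, -5/6, 0, 1/5]

theorem monodromyLog_truncExp :
    1 + monodromyLog + (1/2 : ℚ) • monodromyLog ^ 2 + (1/6 : ℚ) • monodromyLog ^ 3 =
      monodromy := by
  ext i j
  fin_cases i <;> fin_cases j <;>
    norm_num [monodromyLog, monodromy, pow_succ, Matrix.mul_apply, Matrix.one_apply,
      Fin.sum_univ_four]

theorem expNegHMatrix_mul_mukaiMatrix : expNegHMatrix * mukaiMatrix = mukaiMatrix * monodromy := by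
  ext i j
  fin_cases i <;> fin_cases j <;>
    norm_num [expNegHMatrix, mukaiMatrix, monodromy, Matrix.mul_apply, Fin.sum_univ_succ]

theorem truncExpNeg_mul_pow_eq_sum {A : Type*} [Ring A] [Algebra ℚ A] {x : A} (hx : x ^ 4 = 0)
    (k : Fin 4) :
    (1 - x + (1/2 : ℚ) • x ^ 2 - (1/6 : ℚ) • x ^ 3) * x ^ (k : ℕ) =
      ∑ i, expNegHMatrix i k • x ^ (i : ℕ) := by
  have pow_eq_zero : ∀ n, 4 ≤ n → x ^ n = 0 := fun n hn => pow_eq_zero_of_le hn hx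
  fin_cases k <;>
    simp [Fin.sum_univ_four, expNegHMatrix, sub_mul, add_mul, ← sq, ← pow_succ, ← pow_succ',
      ← pow_add, ← pow_mul, pow_eq_zero] <;>
    module

theorem Hcl_pow_four : Hcl ^ 4 = 0 := by
  rw [Hcl, ← map_pow, Ideal.Quotient.eq_zero_iff_mem]
  exact Ideal.subset_span rfl

theorem ch_neg_one_eq_truncExp :
    1 - Hcl + (5/2 : ℚ) • Lcl - (5/6 : ℚ) • pcl =
      1 - Hcl + (1/2 : ℚ) • Hcl ^ 2 - (1/6 : ℚ) • Hcl ^ 3 := by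
  simp only [Lcl, pcl, smul_smul]
  norm_num

theorem mukai_eq_sum_pow (j : Fin 4) :
    ![1, Hcl - (11/2 : ℚ) • Lcl - (25/6 : ℚ) • pcl, -Lcl, pcl] j =
      ∑ k, mukaiMatrix k j • Hcl ^ (k : ℕ) := by
  fin_cases j <;> simp [Fin.sum_univ_four, mukaiMatrix, Lcl, pcl, smul_smul] <;> module

/-- `N = [N]_γ` is the monodromy logarithm of the mirror quintic.
(i) `exp N = 1 + N + N²/2 + N³/6` equals the given integral matrix; (ii) the matrix,
in the Mukai basis `(v₃, v₂, v₁, v₀)` (Chern characters of `ξ₃, ξ₂, ξ₁, ξ₀`), of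
multiplication by `ch(𝒪(−1)) = e^{−H} = 1 − H + (5/2)[L] − (5/6)[p]` equals `exp N`. -/
theorem stmt9 (N expN : Matrix (Fin 4) (Fin 4) ℚ)
    (hN : N = !![0, 0, 0, 0; -1, 0, 0, 0; 11/2, 5, 0, 0; -25/6, 11/2, 1, 0])
    (hexpN : expN = 1 + N + (1/2 : ℚ) • N ^ 2 + (1/6 : ℚ) • N ^ 3)
    (v : Fin 4 → CohQuintic)
    (hv : v = ![1, Hcl - (11/2 : ℚ) • Lcl - (25/6 : ℚ) • pcl, -Lcl, pcl]) :
    expN = !![1, 0, 0, 0; -1, 1, 0, 0; 3, 5, 1, 0; -5, 8, 1, 1] ∧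
    ∀ j, (1 - Hcl + (5/2 : ℚ) • Lcl - (5/6 : ℚ) • pcl) * v j =
      ∑ i, expN i j • v i := by
  have hexp : expN = monodromy := by
    rw [hexpN, hN]
    exact monodromyLog_truncExp
  refine ⟨hexp, fun j => ?_⟩
  subst hv
  rw [hexp, ch_neg_one_eq_truncExp]
  exact (LinearMap.mulLeft ℚ _).apply_eq_sum_of_mul_eq_mul
    (truncExpNeg_mul_pow_eq_sum Hcl_pow_four) mukai_eq_sum_pow expNegHMatrix_mul_mukaiMatrix j
end

section
/- Let R be a commutative ℚ-algebra with elements τ, φ, φ′, φ″, C, and let M := R[H]/(H⁴) with [X°] := 1, [L] := H²/5, [p] := H³/5. Define the R-linear map σ̃ : M → M by σ̃([X°]) = [X°] − φ′[L] + 2φ[p], σ̃(H) = H − φ″[L] + φ′[p], σ̃([L]) = [L], σ̃([p]) = [p], and set σ(α) := σ̃( (1 − τH + (5/2)τ²[L] − (5/6)τ³[p]) · α ). Let Γ̂ := [X°] + (25/12)[L] + C[p], and set ch₃ := [X°], ch₂ := H − (11/2)[L] − (25/6)[p], ch₁ := −[L], ch₀ := [p]. Then: σ(Γ̂ · ch₃)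 = [X°] − τH + ((5/2)τ² + 25/12 + τφ″ − φ′)[L] + (−(5/6)τ³ − (25/12)τ + C − τφ′ + 2φ)[p]; σ(Γ̂ · ch₂) = H − (5τ + 11/2 + φ″)[L] + ((5/2)τ² + (11/2)τ − 25/12 + φ′)[p]; σ(Γ̂ · ch₁) = −[L] + τ[p]; and σ(Γ̂ · ch₀) = [p]. -/
/-- The even cohomology of the Fermat quintic with coefficients in `R`:
`M := R[H]/(H⁴)`. -/
abbrev CohQ (R : Type*) [CommRing R] : Type _ :=
  Polynomial R ⧸ Ideal.span {(Polynomial.X : Polynomial R) ^ 4}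

/-- The hyperplane class `H`. -/
noncomputable def Hc (R : Type*) [CommRing R] : CohQ R :=
  Ideal.Quotient.mk _ Polynomial.X

/-- The line class `[L] := H²/5`. -/
noncomputable def Lc (R : Type*) [CommRing R] [Algebra ℚ R] : CohQ R :=
  (1/5 : ℚ) • Hc R ^ 2

/-- The point class `[p] := H³/5`. -/
noncomputable def pc (R : Type*) [CommRing R] [Algebra ℚ R] : CohQ R :=
  (1/5 : ℚ) • Hc R ^ 3

/-!
`R[H]/(H⁴)` is free over `R` on `[X°], H, [L], [p]`. In these coordinates the cup product is a
polynomial formula (from `H·H = 5[L]`, `H·[L] = [p]` and `H⁴ = 0`) and `σ̃` is a unipotent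
substitution, so each identity reduces to polynomial identities in `τ, φ, φ', φ'', C`.
-/

namespace CohQ

theorem Hc_pow_eq_zero (R : Type*) [CommRing R] {n : ℕ} (hn : 4 ≤ n) : Hc R ^ n = 0 := by
  refine pow_eq_zero_of_le hn ?_
  rw [Hc, ← map_pow]
  exact Ideal.Quotient.eq_zero_iff_mem.2 (Ideal.subset_span rfl)

variable (R : Type*) [CommRing R] [Algebra ℚ R]

theorem Hc_mul_Hc : Hc R * Hc R = (5 : R) • Lc R := by
  rw [Lc, ← algebraMap_smul R (1 / 5 : ℚ), smul_smul, ← map_ofNat (algebraMap ℚ R) 5,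
    ← map_mul]
  norm_num [sq]

theorem Hc_mul_Lc : Hc R * Lc R = pc R := by
  rw [Lc, pc, mul_smul_comm, ← pow_succ']

theorem Hc_mul_pc : Hc R * pc R = 0 := by
  rw [pc, mul_smul_comm, ← pow_succ', Hc_pow_eq_zero R le_rfl, smul_zero]

theorem Lc_mul_Lc : Lc R * Lc R = 0 := by
  rw [Lc, smul_mul_smul_comm, ← pow_add, Hc_pow_eq_zero R le_rfl, smul_zero]

theorem Lc_mul_pc : Lc R * pc R = 0 := by
  rw [Lc, pc, smul_mul_smul_comm, ← pow_add, Hc_pow_eq_zero R (by norm_num), smul_zero]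

theorem pc_mul_pc : pc R * pc R = 0 := by
  rw [pc, smul_mul_smul_comm, ← pow_add, Hc_pow_eq_zero R (by norm_num), smul_zero]

noncomputable def ofCoords (a b c d : R) : CohQ R :=
  a • 1 + b • Hc R + c • Lc R + d • pc R

variable {R}

theorem ofCoords_mul_ofCoords (a b c d a' b' c' d' : R) :
    ofCoords R a b c d * ofCoords R a' b' c' d' =
      ofCoords R (a * a') (a * b' + b * a') (a * c' + c * a' + 5 * b * b')
        (a * d' + d * a' + b * c' + c * b') := by
  simp only [ofCoords, add_mul, mul_add, smul_mul_smul_comm, one_mul, mul_one, Hc_mul_Hc,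
    Hc_mul_Lc, Hc_mul_pc, Lc_mul_Lc, Lc_mul_pc, pc_mul_pc, mul_comm (Lc R) (Hc R),
    mul_comm (pc R) (Hc R), mul_comm (pc R) (Lc R), smul_zero]
  module

theorem map_ofCoords {φ φ' φ'' : R} {σ : CohQ R →ₗ[R] CohQ R}
    (h1 : σ 1 = 1 - φ' • Lc R + (2 * φ) • pc R)
    (hH : σ (Hc R) = Hc R - φ'' • Lc R + φ' • pc R)
    (hL : σ (Lc R) = Lc R) (hp : σ (pc R) = pc R) (a b c d : R) :
    σ (ofCoords R a b c d) =
      ofCoords R a b (c - a * φ' - b * φ'') (d + 2 * a * φ + b * φ') := by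
  simp only [ofCoords, map_add, map_smul, h1, hH, hL, hp]
  module

end CohQ

open CohQ in
/-- `σ̃` is the Gromov–Witten solution map (`σ̃([X°]) = [X°] − φ'[L] + 2φ[p]`,
`σ̃(H) = H − φ''[L] + φ'[p]`, `σ̃([L]) = [L]`, `σ̃([p]) = [p]`), and
`σ(α) := σ̃(e^{−τH}·α)` with `e^{−τH} = 1 − τH + (5/2)τ²[L] − (5/6)τ³[p]`.
With `Γ̂ = [X°] + (25/12)[L] + C[p]` and `ch₃ = [X°]`, `ch₂ = H − (11/2)[L] − (25/6)[p]`,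
`ch₁ = −[L]`, `ch₀ = [p]`, the flat sections `σ(Γ̂·chᵢ)` are the quantum-deformed
integral classes `γ₃ = [X°]_𝒬, γ₂ = [H]_𝒬, γ₁ = −[L]_𝒬, γ₀ = [p]_𝒬`. -/
theorem stmt10 (R : Type*) [CommRing R] [Algebra ℚ R] (τ φ φ' φ'' C : R)
    (σt : CohQ R →ₗ[R] CohQ R)
    (hσ1 : σt 1 = 1 - φ' • Lc R + (2 * φ) • pc R)
    (hσH : σt (Hc R) = Hc R - φ'' • Lc R + φ' • pc R)
    (hσL : σt (Lc R) = Lc R)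
    (hσp : σt (pc R) = pc R)
    (u Γ ch₃ ch₂ ch₁ ch₀ : CohQ R)
    (hu : u = 1 - τ • Hc R + (algebraMap ℚ R (5/2) * τ^2) • Lc R
            - (algebraMap ℚ R (5/6) * τ^3) • pc R)
    (hΓ : Γ = 1 + algebraMap ℚ R (25/12) • Lc R + C • pc R)
    (hch₃ : ch₃ = 1)
    (hch₂ : ch₂ = Hc R - algebraMap ℚ R (11/2) • Lc R - algebraMap ℚ R (25/6) • pc R)
    (hch₁ : ch₁ = -Lc R)
    (hch₀ : ch₀ = pc R) :
    σt (u * (Γ * ch₃)) = 1 - τ • Hc R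
        + (algebraMap ℚ R (5/2) * τ^2 + algebraMap ℚ R (25/12) + τ * φ'' - φ') • Lc R
        + (-(algebraMap ℚ R (5/6) * τ^3) - algebraMap ℚ R (25/12) * τ + C - τ * φ' + 2 * φ) • pc R ∧
    σt (u * (Γ * ch₂)) = Hc R
        - (5 * τ + algebraMap ℚ R (11/2) + φ'') • Lc R
        + (algebraMap ℚ R (5/2) * τ^2 + algebraMap ℚ R (11/2) * τ - algebraMap ℚ R (25/12) + φ') • pc R ∧
    σt (u * (Γ * ch₁)) = -Lc R + τ • pc R ∧
    σt (u * (Γ * ch₀)) = pc R := by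
  have two_mul_25_12 : 2 * algebraMap ℚ R (25/12) = algebraMap ℚ R (25/6) := by
    rw [← map_ofNat (algebraMap ℚ R) 2, ← map_mul]; norm_num
  have hu : u = ofCoords R 1 (-τ) (algebraMap ℚ R (5/2) * τ^2)
      (-(algebraMap ℚ R (5/6) * τ^3)) := by
    rw [hu, ofCoords]; module
  have hΓ : Γ = ofCoords R 1 0 (algebraMap ℚ R (25/12)) C := by rw [hΓ, ofCoords]; module
  have hch₃ : ch₃ = ofCoords R 1 0 0 0 := by rw [hch₃, ofCoords]; module
  have hch₂ : ch₂ =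
      ofCoords R 0 1 (-algebraMap ℚ R (11/2)) (-(2 * algebraMap ℚ R (25/12))) := by
    rw [hch₂, ofCoords, two_mul_25_12]; module
  have hch₁ : ch₁ = ofCoords R 0 0 (-1) 0 := by rw [hch₁, ofCoords]; module
  have hch₀ : ch₀ = ofCoords R 0 0 0 1 := by rw [hch₀, ofCoords]; module
  simp only [hu, hΓ, hch₃, hch₂, hch₁, hch₀, ofCoords_mul_ofCoords,
    map_ofCoords hσ1 hσH hσL hσp]
  simp only [ofCoords]
  refine ⟨?_, ?_, ?_, ?_⟩ <;> module
end

section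
/- In ℚ⟦s⟧ let g := Σ_{k≥1} ((3k)!/((k!)³ · k)) s^k and f := −s · exp(g), so f has constant coefficient 0 and linear coefficient −1, and hence possesses a unique compositional inverse f⁻¹ ∈ ℚ⟦Q⟧ (with f(f⁻¹(Q)) = Q and f⁻¹(f(s)) = s). Then there is a unique power series c ∈ ℚ⟦Q⟧ with constant coefficient 1 such that f⁻¹(Q) · c(Q)³ = −Q, and its initial coefficients are c = 1 − 2Q + 5Q² − 32Q³ + O(Q⁴). -/
open PowerSeries

/-- Composition `g ∘ f` of formal power series (valid when `f` has zero constant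
coefficient, in which case `coeff n (f^k) = 0` for `k > n` and the sum below is the
full sum `Σ_k (coeff k g)·fᵏ`). -/
noncomputable def pscomp (g f : PowerSeries ℚ) : PowerSeries ℚ :=
  PowerSeries.mk fun n =>
    ∑ k ∈ Finset.range (n + 1), (PowerSeries.coeff k g) * (PowerSeries.coeff n (f ^ k))

/-- `g := Σ_{k≥1} ((3k)!/((k!)³·k)) sᵏ ∈ ℚ⟦s⟧`. -/
noncomputable def gser : PowerSeries ℚ :=
  PowerSeries.mk fun k =>
    if k = 0 then 0 else ((3 * k).factorial : ℚ) / ((k.factorial : ℚ) ^ 3 * k)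

/-- `f := −s·exp(g(s)) ∈ ℚ⟦s⟧`, the exponentiated local mirror map of `K_{ℙ²}`. -/
noncomputable def fser : PowerSeries ℚ :=
  -(PowerSeries.X * pscomp (PowerSeries.exp ℚ) gser)

/-! The relation `fser ∘ f⁻¹ = X` says `-f⁻¹ · (exp ∘ g ∘ f⁻¹) = X`, so `f⁻¹ · c³ = -X` is
equivalent to `c³ = exp ∘ g ∘ f⁻¹`. A power series `r` with constant coefficient `1` has exactly
one cube root with constant coefficient `1`: the binomial series `(1 + X)^(1/3)` evaluated at
`r - 1` is one, and `a³ - b³ = (a - b)(a² + ab + b²)` with `a² + ab + b²` of constant coefficient `3`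
shows there is only one. For the coefficients, substitute `fser` back in:
`(c ∘ fser)³ = exp ∘ g`, which determines the first coefficients of `c` by a triangular system,
without ever computing `f⁻¹`. -/

open Finset

namespace PowerSeries

variable {R : Type*} [CommRing R]

theorem coeff_pow_eq_zero_of_lt {b : R⟦X⟧} (hb : constantCoeff b = 0) {n k : ℕ} (h : n < k) :
    coeff n (b ^ k) = 0 :=
  coeff_of_lt_order n ((Nat.cast_lt.mpr h).trans_le (le_order_pow_of_constantCoeff_eq_zero k hb))

theorem coeff_subst_eq_sum_range {b : R⟦X⟧} (hb : constantCoeff b = 0) (a : R⟦X⟧)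
    (n : ℕ) :
    coeff n (a.subst b) = ∑ k ∈ range (n + 1), coeff k a * coeff n (b ^ k) := by
  rw [coeff_subst' (HasSubst.of_constantCoeff_zero' hb)]
  refine finsum_eq_sum_of_support_subset _ fun k hk => ?_
  rw [coe_range, Set.mem_Iio]
  by_contra h
  exact hk (by dsimp only; rw [smul_eq_mul, coeff_pow_eq_zero_of_lt hb (by omega), mul_zero])

theorem constantCoeff_subst_of_constantCoeff_eq_zero {b : R⟦X⟧} (hb : constantCoeff b = 0)
    (a : R⟦X⟧) : constantCoeff (a.subst b) = constantCoeff a := by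
  simpa using coeff_subst_eq_sum_range hb a 0

theorem coeff_one_subst {b : R⟦X⟧} (hb : constantCoeff b = 0) (a : R⟦X⟧) :
    coeff 1 (a.subst b) = coeff 1 a * coeff 1 b := by
  simp [coeff_subst_eq_sum_range hb, sum_range_succ]

theorem coeff_two_subst {b : R⟦X⟧} (hb : constantCoeff b = 0) (a : R⟦X⟧) :
    coeff 2 (a.subst b) = coeff 1 a * coeff 2 b + coeff 2 a * coeff 1 b ^ 2 := by
  have hb0 : coeff 0 b = 0 := by rw [coeff_zero_eq_constantCoeff_apply, hb]
  simp only [coeff_subst_eq_sum_range hb, sum_range_succ, sum_range_zero, pow_zero, pow_one,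
    pow_two, coeff_mul, Nat.sum_antidiagonal_eq_sum_range_succ_mk, Nat.reduceSub, Nat.reduceAdd,
    coeff_one, OfNat.ofNat_ne_zero, if_false, hb0]
  ring

theorem coeff_three_subst {b : R⟦X⟧} (hb : constantCoeff b = 0) (a : R⟦X⟧) :
    coeff 3 (a.subst b) =
      coeff 1 a * coeff 3 b + 2 * coeff 2 a * coeff 1 b * coeff 2 b
        + coeff 3 a * coeff 1 b ^ 3 := by
  have hb0 : coeff 0 b = 0 := by rw [coeff_zero_eq_constantCoeff_apply, hb]
  simp only [coeff_subst_eq_sum_range hb, sum_range_succ, sum_range_zero, pow_zero, pow_one,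
    pow_two, pow_three, coeff_mul, Nat.sum_antidiagonal_eq_sum_range_succ_mk, Nat.reduceSub,
    Nat.reduceAdd, coeff_one, OfNat.ofNat_ne_zero, if_false, hb0]
  ring

theorem coeff_one_pow_three (a : R⟦X⟧) :
    coeff 1 (a ^ 3) = 3 * coeff 0 a ^ 2 * coeff 1 a := by
  simp only [pow_three, coeff_mul, Nat.sum_antidiagonal_eq_sum_range_succ_mk, sum_range_succ,
    sum_range_zero, Nat.reduceSub]
  ring

theorem coeff_two_pow_three (a : R⟦X⟧) :
    coeff 2 (a ^ 3) = 3 * coeff 0 a ^ 2 * coeff 2 a + 3 * coeff 0 a * coeff 1 a ^ 2 := by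
  simp only [pow_three, coeff_mul, Nat.sum_antidiagonal_eq_sum_range_succ_mk, sum_range_succ,
    sum_range_zero, Nat.reduceSub]
  ring

theorem coeff_three_pow_three (a : R⟦X⟧) :
    coeff 3 (a ^ 3) = 3 * coeff 0 a ^ 2 * coeff 3 a + 6 * coeff 0 a * coeff 1 a * coeff 2 a
      + coeff 1 a ^ 3 := by
  simp only [pow_three, coeff_mul, Nat.sum_antidiagonal_eq_sum_range_succ_mk, sum_range_succ,
    sum_range_zero, Nat.reduceSub]
  ring

theorem existsUnique_subst_eq_X {P : R⟦X⟧} (hP : constantCoeff P = 0)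
    (hP' : IsUnit (coeff 1 P)) :
    ∃! Q : R⟦X⟧, constantCoeff Q = 0 ∧ P.subst Q = X ∧ Q.subst P = X := by
  set Q₀ := P.substInvOfIsUnit hP'
  refine ⟨Q₀, ⟨constantCoeff_substInvOfIsUnit P hP', subst_substInvOfIsUnit_right P hP hP',
    subst_substInvOfIsUnit_left P hP hP'⟩, ?_⟩
  rintro Q ⟨hQ, hPQ, -⟩
  have hQ' : HasSubst Q := HasSubst.of_constantCoeff_zero' hQ
  calc Q = subst Q (subst P Q₀) := by rw [subst_substInvOfIsUnit_left P hP hP', subst_X hQ']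
    _ = Q₀ := by
      rw [subst_comp_subst_apply (HasSubst.of_constantCoeff_zero' hP) hQ', hPQ, X_subst]

theorem binomialSeries_pow {S A : Type*} [CommRing S] [BinomialRing S] [Ring A] [Algebra S A]
    (r : S) (n : ℕ) : binomialSeries A r ^ n = binomialSeries A (n * r) := by
  induction n with
  | zero => simp
  | succ n ih => rw [pow_succ, ih, ← binomialSeries_add]; push_cast; ring_nf

theorem eq_of_pow_eq_pow_of_constantCoeff_eq_one [IsDomain R] [CharZero R] {n : ℕ} (hn : n ≠ 0)
    {a b : R⟦X⟧} (ha : constantCoeff a = 1) (hb : constantCoeff b = 1) (h : a ^ n = b ^ n) :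
    a = b := by
  have hgeom : ∑ i ∈ range n, a ^ i * b ^ (n - 1 - i) ≠ 0 :=
    ne_of_apply_ne constantCoeff (by simp [ha, hb, hn])
  have := geom_sum₂_mul a b n
  rw [h, sub_self] at this
  exact sub_eq_zero.mp ((mul_eq_zero.mp this).resolve_left hgeom)

theorem exists_pow_eq_of_constantCoeff_eq_one {K : Type*} [Field K] [CharZero K] {n : ℕ}
    (hn : n ≠ 0) {r : K⟦X⟧} (hr : constantCoeff r = 1) :
    ∃ c : K⟦X⟧, constantCoeff c = 1 ∧ c ^ n = r := by
  have hr' : constantCoeff (r - 1) = 0 := by simp [hr]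
  have hs : HasSubst (r - 1) := HasSubst.of_constantCoeff_zero' hr'
  have hone : binomialSeries K (1 : K) = 1 + X := by
    simpa using binomialSeries_nat (R := K) (A := K) 1
  refine ⟨(binomialSeries K (n⁻¹ : K)).subst (r - 1), ?_, ?_⟩
  · rw [constantCoeff_subst_of_constantCoeff_eq_zero hr', binomialSeries_constantCoeff]
  · rw [← subst_pow hs, binomialSeries_pow, mul_inv_cancel₀ (Nat.cast_ne_zero.mpr hn), hone,
      ← coe_substAlgHom hs, map_add, map_one, coe_substAlgHom hs, subst_X hs, add_sub_cancel]

theorem existsUnique_pow_eq_of_constantCoeff_eq_one {K : Type*} [Field K] [CharZero K] {n : ℕ}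
    (hn : n ≠ 0) {r : K⟦X⟧} (hr : constantCoeff r = 1) :
    ∃! c : K⟦X⟧, constantCoeff c = 1 ∧ c ^ n = r := by
  obtain ⟨c, hc, hcn⟩ := exists_pow_eq_of_constantCoeff_eq_one hn hr
  exact ⟨c, ⟨hc, hcn⟩, fun d ⟨hd, hdn⟩ =>
    eq_of_pow_eq_pow_of_constantCoeff_eq_one hn hd hc (hdn.trans hcn.symm)⟩

end PowerSeries

theorem pscomp_eq_subst {f : ℚ⟦X⟧} (hf : constantCoeff f = 0) (g : ℚ⟦X⟧) :
    pscomp g f = g.subst f := by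
  ext n
  rw [pscomp, coeff_mk, coeff_subst_eq_sum_range hf]

theorem constantCoeff_gser : constantCoeff gser = 0 := by
  simp [gser, ← coeff_zero_eq_constantCoeff_apply]

theorem coeff_one_gser : coeff 1 gser = 6 := by norm_num [gser, Nat.factorial]

theorem coeff_two_gser : coeff 2 gser = 45 := by norm_num [gser, Nat.factorial]

theorem coeff_three_gser : coeff 3 gser = 560 := by norm_num [gser, Nat.factorial]

noncomputable def expGser : ℚ⟦X⟧ := (exp ℚ).subst gser

theorem constantCoeff_expGser : constantCoeff expGser = 1 := by
  simp [expGser, constantCoeff_subst_of_constantCoeff_eq_zero constantCoeff_gser]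

theorem coeff_one_expGser : coeff 1 expGser = 6 := by
  simp [expGser, coeff_one_subst constantCoeff_gser, coeff_one_gser]

theorem coeff_two_expGser : coeff 2 expGser = 63 := by
  norm_num [expGser, coeff_two_subst constantCoeff_gser, coeff_one_gser, coeff_two_gser]

theorem coeff_three_expGser : coeff 3 expGser = 866 := by
  norm_num [expGser, coeff_three_subst constantCoeff_gser, coeff_one_gser, coeff_two_gser,
    coeff_three_gser, Nat.factorial]

theorem fser_eq : fser = -(X * expGser) := by
  rw [fser, pscomp_eq_subst constantCoeff_gser, expGser]

theorem constantCoeff_fser : constantCoeff fser = 0 := by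
  simp [fser]

theorem coeff_succ_fser (n : ℕ) : coeff (n + 1) fser = -coeff n expGser := by
  rw [fser_eq, map_neg, coeff_succ_X_mul]

theorem coeff_one_fser : coeff 1 fser = -1 := by
  rw [coeff_succ_fser, coeff_zero_eq_constantCoeff_apply, constantCoeff_expGser]

theorem mul_pow_three_eq_neg_X_iff {fi : ℚ⟦X⟧} (hfi : constantCoeff fi = 0)
    (hR : fser.subst fi = X) (c : ℚ⟦X⟧) :
    fi * c ^ 3 = -X ↔ c ^ 3 = expGser.subst fi := by
  have hs : HasSubst fi := HasSubst.of_constantCoeff_zero' hfi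
  have hX : -X = fi * expGser.subst fi := by
    rw [← hR, fser_eq, ← coe_substAlgHom hs, map_neg, map_mul, coe_substAlgHom hs, subst_X hs,
      neg_neg]
  have hfi0 : fi ≠ 0 := by
    rintro rfl
    simp at hX
  rw [hX]
  exact mul_right_inj' hfi0

theorem subst_fser_pow_three_eq {fi c : ℚ⟦X⟧} (hfi : constantCoeff fi = 0)
    (hL : fi.subst fser = X) (hc : c ^ 3 = expGser.subst fi) :
    (c.subst fser) ^ 3 = expGser := by
  have hf : HasSubst fser := HasSubst.of_constantCoeff_zero' constantCoeff_fser
  rw [← subst_pow hf, hc, subst_comp_subst_apply (HasSubst.of_constantCoeff_zero' hfi) hf, hL,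
    X_subst]

theorem coeff_of_subst_fser_pow_three_eq {c : ℚ⟦X⟧} (hc : constantCoeff c = 1)
    (h : (c.subst fser) ^ 3 = expGser) :
    coeff 1 c = -2 ∧ coeff 2 c = 5 ∧ coeff 3 c = -32 := by
  have hf := constantCoeff_fser
  have hf2 : coeff 2 fser = -6 := by rw [coeff_succ_fser, coeff_one_expGser]
  have hf3 : coeff 3 fser = -63 := by rw [coeff_succ_fser, coeff_two_expGser]
  have hc0 : coeff 0 (c.subst fser) = 1 := by
    rw [coeff_zero_eq_constantCoeff_apply, constantCoeff_subst_of_constantCoeff_eq_zero hf, hc]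
  have e1 := congrArg (coeff 1) h
  have e2 := congrArg (coeff 2) h
  have e3 := congrArg (coeff 3) h
  rw [coeff_one_pow_three, coeff_one_expGser, coeff_one_subst hf, hc0, coeff_one_fser] at e1
  rw [coeff_two_pow_three, coeff_two_expGser, coeff_two_subst hf, coeff_one_subst hf, hc0,
    coeff_one_fser, hf2] at e2
  rw [coeff_three_pow_three, coeff_three_expGser, coeff_three_subst hf, coeff_two_subst hf,
    coeff_one_subst hf, hc0, coeff_one_fser, hf2, hf3] at e3
  have h1 : coeff 1 c = -2 := by linear_combination -e1 / 3
  rw [h1] at e2 e3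
  have h2 : coeff 2 c = 5 := by linear_combination e2 / 3
  rw [h2] at e3
  exact ⟨h1, h2, by linear_combination -e3 / 3⟩

/-- `f = −s·exp(g)` has constant coefficient `0` and linear coefficient
`−1`, hence possesses a unique compositional inverse `f⁻¹`; and there is a unique power
series `c` with constant coefficient `1` such that `f⁻¹(Q)·c(Q)³ = −Q`, whose initial
coefficients are `c = 1 − 2Q + 5Q² − 32Q³ + O(Q⁴)`. -/
theorem stmt14 :
    PowerSeries.constantCoeff fser = 0 ∧
    PowerSeries.coeff 1 fser = -1 ∧
    (∃! fi : PowerSeries ℚ, PowerSeries.constantCoeff fi = 0 ∧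
        pscomp fser fi = PowerSeries.X ∧ pscomp fi fser = PowerSeries.X) ∧
    ∀ fi : PowerSeries ℚ, PowerSeries.constantCoeff fi = 0 →
      pscomp fser fi = PowerSeries.X → pscomp fi fser = PowerSeries.X →
        (∃! c : PowerSeries ℚ, PowerSeries.constantCoeff c = 1 ∧
            fi * c ^ 3 = -PowerSeries.X) ∧
        ∀ c : PowerSeries ℚ, PowerSeries.constantCoeff c = 1 →
          fi * c ^ 3 = -PowerSeries.X →
            PowerSeries.coeff 0 c = 1 ∧ PowerSeries.coeff 1 c = -2 ∧
            PowerSeries.coeff 2 c = 5 ∧ PowerSeries.coeff 3 c = -32 := by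
  have hf := constantCoeff_fser
  refine ⟨hf, coeff_one_fser, ?_, fun fi hfi hR hL => ?_⟩
  · refine (existsUnique_congr fun fi => and_congr_right fun hfi => ?_).mpr
      (existsUnique_subst_eq_X hf (coeff_one_fser ▸ isUnit_one.neg))
    rw [pscomp_eq_subst hfi, pscomp_eq_subst hf]
  rw [pscomp_eq_subst hfi] at hR
  rw [pscomp_eq_subst hf] at hL
  have hr : constantCoeff (expGser.subst fi) = 1 := by
    rw [constantCoeff_subst_of_constantCoeff_eq_zero hfi, constantCoeff_expGser]
  refine ⟨(existsUnique_congr fun c =>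
      and_congr_right' (mul_pow_three_eq_neg_X_iff hfi hR c)).mpr
    (existsUnique_pow_eq_of_constantCoeff_eq_one three_ne_zero hr), fun c hc hcX => ?_⟩
  have hcubic := subst_fser_pow_three_eq hfi hL ((mul_pow_three_eq_neg_X_iff hfi hR c).mp hcX)
  exact ⟨by rw [coeff_zero_eq_constantCoeff_apply, hc], coeff_of_subst_fser_pow_three_eq hc hcubic⟩
end
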